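/- Let R be a finite commutative ring and I an ideal with R/I ≅ ℤ/9 and |I| = t. Then Γ_I(R) is isomorphic to the complete graph K_{2t}. -/

import Mathlib

/-!
Whether `x` is a vertex of `Γ_I(R)`, and whether `x * y ∈ I`, depends only on the classes of
`x` and `y` in `R/I ≅ ℤ/9`. So the vertices are the elements whose class is a nonzero
zero-divisor of `ℤ/9`, namely `3` or `6`: two cosets of `I`, hence `2t` of them. Since
`3 * 3`, `3 * 6` and `6 * 6` all vanish mod `9`, any two vertices are adjacent.
-/

open SimpleGraph

/-- The vertex set of the ideal-based zero-divisor graph `Γ_I(R)`. -/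
def zdvSet (R : Type*) [CommRing R] (I : Ideal R) : Set R :=
  {x | x ∉ I ∧ ∃ y, y ∉ I ∧ x * y ∈ I}

/-- The ideal-based zero-divisor graph `Γ_I(R)` on its vertex set. -/
def GammaI (R : Type*) [CommRing R] (I : Ideal R) : SimpleGraph (zdvSet R I) where
  Adj x y := x ≠ y ∧ (x : R) * y ∈ I
  symm := by
    constructor
    rintro x y ⟨h1, h2⟩
    exact ⟨fun e => h1 e.symm, by rwa [mul_comm]⟩
  loopless := by constructor; rintro x ⟨h1, _⟩; exact h1 rfl

def nonzeroZeroDivisors (S : Type*) [CommRing S] : Set S :=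
  {a | a ≠ 0 ∧ ∃ b, b ≠ 0 ∧ a * b = 0}

theorem preimage_nonzeroZeroDivisors {S T : Type*} [CommRing S] [CommRing T] (e : S ≃+* T) :
    e ⁻¹' nonzeroZeroDivisors T = nonzeroZeroDivisors S := by
  ext a
  simp only [nonzeroZeroDivisors, Set.mem_preimage, Set.mem_ofPred_eq, ne_eq,
    map_eq_zero_iff e e.injective, e.surjective.exists, ← map_mul]

theorem zdvSet_eq_preimage_mk {R : Type*} [CommRing R] (I : Ideal R) :
    zdvSet R I = Ideal.Quotient.mk I ⁻¹' nonzeroZeroDivisors (R ⧸ I) := by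
  ext x
  simp only [zdvSet, nonzeroZeroDivisors, Set.mem_preimage, Set.mem_ofPred_eq, ne_eq,
    Ideal.Quotient.mk_surjective.exists, ← map_mul, Ideal.Quotient.eq_zero_iff_mem]

theorem Ideal.card_preimage_mk {R : Type*} [CommRing R] (I : Ideal R) (t : Set (R ⧸ I)) :
    Nat.card (Ideal.Quotient.mk I ⁻¹' t) = Nat.card I * Nat.card t := by
  rw [← Nat.card_prod]
  exact Nat.card_congr (QuotientAddGroup.preimageMkEquivAddSubgroupProdSet I.toAddSubgroup t)

theorem card_zdvSet {R : Type*} [CommRing R] (I : Ideal R) :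
    Nat.card (zdvSet R I) = Nat.card I * Nat.card (nonzeroZeroDivisors (R ⧸ I)) := by
  rw [zdvSet_eq_preimage_mk, Ideal.card_preimage_mk]

theorem GammaI_eq_top {R : Type*} [CommRing R] (I : Ideal R)
    (h : ∀ a ∈ nonzeroZeroDivisors (R ⧸ I), ∀ b ∈ nonzeroZeroDivisors (R ⧸ I), a * b = 0) :
    GammaI R I = ⊤ := by
  ext ⟨x, hx⟩ ⟨y, hy⟩
  rw [zdvSet_eq_preimage_mk] at hx hy
  simp only [GammaI, top_adj, and_iff_left_iff_imp]
  intro _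
  rw [← Ideal.Quotient.eq_zero_iff_mem, map_mul]
  exact h _ hx _ hy

theorem nonzeroZeroDivisors_zmod_nine : nonzeroZeroDivisors (ZMod 9) = {3, 6} := by
  ext a
  simp only [nonzeroZeroDivisors, Set.mem_ofPred_eq, Set.mem_insert_iff, Set.mem_singleton_iff]
  revert a
  decide

theorem mul_eq_zero_of_mem_nonzeroZeroDivisors_zmod_nine {a b : ZMod 9}
    (ha : a ∈ nonzeroZeroDivisors (ZMod 9)) (hb : b ∈ nonzeroZeroDivisors (ZMod 9)) :
    a * b = 0 := by
  simp only [nonzeroZeroDivisors_zmod_nine, Set.mem_insert_iff, Set.mem_singleton_iff] at ha hb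
  rcases ha with rfl | rfl <;> rcases hb with rfl | rfl <;> decide

/-- If `R` is a finite commutative ring and `I` is an ideal with `R/I ≅ ℤ/9` and
`|I| = t`, then `Γ_I(R) ≅ K_{2t}`. -/
theorem stmt_15 (R : Type*) [CommRing R] [Finite R] (I : Ideal R)
    (e : (R ⧸ I) ≃+* ZMod 9) (t : ℕ) (ht : Nat.card I = t) :
    Nonempty (GammaI R I ≃g completeGraph (Fin (2 * t))) := by
  have hZ : nonzeroZeroDivisors (R ⧸ I) = e ⁻¹' {3, 6} := by
    rw [← nonzeroZeroDivisors_zmod_nine, preimage_nonzeroZeroDivisors]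
  have hcard : Nat.card (zdvSet R I) = 2 * t := by
    rw [card_zdvSet, hZ, ht, Nat.card_preimage_of_injective e.injective
      (by simp [e.surjective.range_eq]), mul_comm,
      Nat.card_coe_set_eq, Set.ncard_pair (by decide)]
  have htop : GammaI R I = ⊤ := GammaI_eq_top I fun a ha b hb => e.injective <| by
    rw [← preimage_nonzeroZeroDivisors e] at ha hb
    rw [map_mul, map_zero]
    exact mul_eq_zero_of_mem_nonzeroZeroDivisors_zmod_nine ha hb
  rw [htop]
  exact ⟨Iso.completeGraph (Finite.equivFinOfCardEq hcard)⟩
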